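/- arXiv:2506.03081 — 2 statements merged into one kernel-verified Lean document; each statement's English description precedes it below -/
import Mathlib

section
/- For a triangle with vertices x_{p1}, x_{p2}, x_{p3} ordered counterclockwise, nodal values φ_{p_i}, corner normal l_{pc} n_{pc} at vertex p, and discrete gradient ∇_c φ = (1/|ω_c|) Σ_q (l_{qc} n_{qc}) φ_q, the two-dimensional cross product satisfies -(l_{pc} n_{pc}) × ∇_c φ = ½(φ_{p⁺} - φ_{p⁻}), where p⁻, p⁺ are the other two vertices in counterclockwise order, and a × b denotes the scalar a_1 b_2 - a_2 b_1. -/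
/-- For a counterclockwise triangle, the 2D cross product of minus the corner
normal at vertex `p` with the discrete gradient of the nodal field `φ` equals
`½(φ_{p⁺} - φ_{p⁻})`, where `p⁻ = p+1`, `p⁺ = p+2` are the other two vertices
in counterclockwise order. -/
theorem corner_normal_cross_discrete_gradient (x y φ : Fin 3 → ℝ)
    (ω : ℝ)
    (hω : ω = 1 / 2 * (x 0 * y 1 - x 0 * y 2 - x 1 * y 0 + x 1 * y 2
                        + x 2 * y 0 - x 2 * y 1))
    (hωpos : 0 < ω)
    (g : ℝ × ℝ)
    (hg : g = ((1 / ω) * ∑ i : Fin 3, (1 / 2 * (y (i + 1) - y (i + 2))) * φ i,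
               (1 / ω) * ∑ i : Fin 3, (1 / 2 * (x (i + 2) - x (i + 1))) * φ i))
    (p : Fin 3) :
    -((1 / 2 * (y (p + 1) - y (p + 2))) * g.2
        - (1 / 2 * (x (p + 2) - x (p + 1))) * g.1)
      = 1 / 2 * (φ (p + 2) - φ (p + 1)) := by
  subst hg
  have hω' : ω ≠ 0 := ne_of_gt hωpos
  have hp : p = 0 ∨ p = 1 ∨ p = 2 := by omega
  rcases hp with h | h | h <;> subst h <;>
  · simp only [Fin.sum_univ_three, show ((0:Fin 3)+1)=1 from rfl,
      show ((0:Fin 3)+2)=2 from rfl, show ((1:Fin 3)+1)=2 from rfl,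
      show ((1:Fin 3)+2)=0 from rfl, show ((2:Fin 3)+1)=0 from rfl,
      show ((2:Fin 3)+2)=1 from rfl]
    field_simp
    rw [hω]
    ring
end

section
/- Discrete curl-grad identity: on a 2D triangulation, let φ_p be a scalar field on the nodes and define on each triangle c the discrete gradient ∇_c φ = (1/|ω_c|) Σ_{p∈c} (l_{pc} n_{pc}) φ_p. Define the discrete curl at an interior node p by |ω_p| (∇×)_p J = -Σ_{c∋p} (l_{pc} n_{pc}) × J_c for cell-valued vector fields J_c. Then for every interior node p, (∇×)_p (∇_c φ) = 0. -/
/-- Discrete curl-grad identity around an interior node of a 2D triangulation.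
The fan of triangles around the interior node is modelled by ring vertices
`R : ZMod n → ℝ × ℝ`; triangle `c` has counterclockwise vertices
`(X₀, R c, R (c+1))` where `X₀` is the central node. With the discrete
P1 gradient on each triangle, the discrete curl at the node (minus the sum of
the 2D cross products of the corner normals at the node with the cell
gradients) vanishes. -/
theorem discrete_curl_of_discrete_grad_eq_zero (n : ℕ) [NeZero n]
    (X₀ : ℝ × ℝ) (R : ZMod n → ℝ × ℝ)
    (φ₀ : ℝ) (φr : ZMod n → ℝ)
    (ω : ZMod n → ℝ)
    (hω : ∀ c, ω c = 1 / 2 * (X₀.1 * (R c).2 - X₀.1 * (R (c + 1)).2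
        - (R c).1 * X₀.2 + (R c).1 * (R (c + 1)).2
        + (R (c + 1)).1 * X₀.2 - (R (c + 1)).1 * (R c).2))
    (hωpos : ∀ c, 0 < ω c)
    (g : ZMod n → ℝ × ℝ)
    (hg : ∀ c, g c =
      ((1 / ω c) * (1 / 2 * ((R c).2 - (R (c + 1)).2) * φ₀
          + 1 / 2 * ((R (c + 1)).2 - X₀.2) * φr c
          + 1 / 2 * (X₀.2 - (R c).2) * φr (c + 1)),
       (1 / ω c) * (1 / 2 * ((R (c + 1)).1 - (R c).1) * φ₀
          + 1 / 2 * (X₀.1 - (R (c + 1)).1) * φr c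
          + 1 / 2 * ((R c).1 - X₀.1) * φr (c + 1)))) :
    -∑ c : ZMod n,
        ((1 / 2 * ((R c).2 - (R (c + 1)).2)) * (g c).2
          - (1 / 2 * ((R (c + 1)).1 - (R c).1)) * (g c).1) = 0 := by
  
  have hne : ∀ c : ZMod n, ω c ≠ 0 := fun c => (hωpos c).ne'
  have key : ∀ c : ZMod n,
      ((1 / 2 * ((R c).2 - (R (c + 1)).2)) * (g c).2
        - (1 / 2 * ((R (c + 1)).1 - (R c).1)) * (g c).1)
      = 1 / 2 * φr c - 1 / 2 * φr (c + 1) := by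
    intro c
    rw [hg c]
    have hw := hω c
    have h0 := hne c
    field_simp
    rw [hw]
    ring
  rw [Finset.sum_congr rfl (fun c _ => key c)]
  rw [Finset.sum_sub_distrib]
  have : ∑ c : ZMod n, 1 / 2 * φr (c + 1) = ∑ c : ZMod n, 1 / 2 * φr c :=
    Fintype.sum_equiv (Equiv.addRight (1 : ZMod n)) _ _ (fun c => rfl)
  rw [this]
  simp
end
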